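/- Let T ∈ GL(2,ℝ) with complex eigenvalues cos θ ± i sin θ (det T = 1) such that 0 < cos θ < 1. Then there exists a nonzero a ∈ ℝ² with ‖T⁻¹(a)‖ < 1 such that the map T̄ₐ(x) = (a+T(x))/‖a+T(x)‖ on S¹ has a fixed point. -/

import Mathlib

/-!
Since `tr T⁻¹ = tr T = 2 cos θ > 0`, some standard basis vector `x` has `⟪T⁻¹ x, x⟫ > 0`.
With `u = T⁻¹ x` and `c = ⟪u, x⟫ / ‖u‖² > 0` put `a = c x - T x`. Then `a + T x = c x`, so `x`
is fixed by `T̄ₐ`; `T⁻¹ a = c u - x` is `x` minus its nonzero orthogonal projection onto `ℝ u`,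
hence shorter than `x`; and `a ≠ 0` because `T`, with `det T = 1` and `|tr T| < 2`, has no real
eigenvalue.
-/

open RealInnerProductSpace

/-- The "affine" map `x ↦ (a + T(x))/‖a + T(x)‖` induced on the unit sphere. -/
noncomputable def affAct {m : ℕ} (A : Matrix (Fin m) (Fin m) ℝ)
    (a x : EuclideanSpace ℝ (Fin m)) : EuclideanSpace ℝ (Fin m) :=
  ‖a + Matrix.toEuclideanLin A x‖⁻¹ • (a + Matrix.toEuclideanLin A x)

/-- `(⟪u, x⟫ / ‖u‖ ^ 2) • u` is the orthogonal projection of `x` onto `ℝ u`. -/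
theorem norm_smul_sub_lt_norm_of_inner_ne_zero {E : Type*} [NormedAddCommGroup E]
    [InnerProductSpace ℝ E] {u x : E} (h : ⟪u, x⟫ ≠ 0) :
    ‖(⟪u, x⟫ / ‖u‖ ^ 2) • u - x‖ < ‖x‖ := by
  have hu : ‖u‖ ≠ 0 := norm_ne_zero_iff.2 fun hu ↦ h (by simp [hu])
  have hsq : ‖(⟪u, x⟫ / ‖u‖ ^ 2) • u - x‖ ^ 2 = ‖x‖ ^ 2 - ⟪u, x⟫ ^ 2 / ‖u‖ ^ 2 := by
    rw [norm_sub_sq_real, real_inner_smul_left, norm_smul, Real.norm_eq_abs, mul_pow, sq_abs]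
    field_simp
    ring
  refine lt_of_pow_lt_pow_left₀ 2 (norm_nonneg x) ?_
  rw [hsq]
  have : 0 < ⟪u, x⟫ ^ 2 / ‖u‖ ^ 2 := by positivity
  linarith

namespace Matrix

theorem trace_inv_fin_two_of_det_eq_one {R : Type*} [CommRing R] {A : Matrix (Fin 2) (Fin 2) R}
    (h : A.det = 1) : A⁻¹.trace = A.trace := by
  rw [inv_def, h, Ring.inverse_one, one_smul, adjugate_fin_two, trace_fin_two, trace_fin_two]
  simp [add_comm]

theorem det_sub_smul_one_pos_fin_two {A : Matrix (Fin 2) (Fin 2) ℝ} (hdet : A.det = 1)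
    (htr : |A.trace| < 2) (c : ℝ) : 0 < (A - c • 1).det := by
  have hdet' : (A - c • 1).det = (c - A.trace / 2) ^ 2 + (1 - (A.trace / 2) ^ 2) := by
    rw [det_fin_two] at hdet ⊢
    simp only [trace_fin_two, sub_apply, smul_apply, one_apply_eq, one_apply_ne zero_ne_one,
      one_apply_ne one_ne_zero, smul_eq_mul]
    linear_combination hdet
  have : (A.trace / 2) ^ 2 < 1 := by
    rw [sq_lt_one_iff_abs_lt_one, abs_div]
    simp only [abs_two]
    linarith
  rw [hdet']
  positivity

theorem exists_diag_pos_of_trace_pos {n : Type*} [Fintype n] {A : Matrix n n ℝ}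
    (h : 0 < A.trace) : ∃ i, 0 < A i i := by
  obtain ⟨i, -, hi⟩ :=
    Finset.exists_lt_of_sum_lt (f := fun _ ↦ 0) (g := fun i ↦ A i i) (by simpa [trace] using h)
  exact ⟨i, hi⟩

variable {n : Type*} [Fintype n] [DecidableEq n]

theorem inner_toEuclideanLin_single (A : Matrix n n ℝ) (i : n) :
    ⟪toEuclideanLin A (EuclideanSpace.single i 1), EuclideanSpace.single i 1⟫ = A i i := by
  simp [EuclideanSpace.inner_single_right, mulVec_single]

theorem toEuclideanLin_apply_ne_smul {A : Matrix n n ℝ} {c : ℝ} (h : (A - c • 1).det ≠ 0)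
    {x : EuclideanSpace ℝ n} (hx : x ≠ 0) : toEuclideanLin A x ≠ c • x := by
  intro hAx
  refine h (exists_mulVec_eq_zero_iff.1 ⟨x.ofLp, by simpa using hx, ?_⟩)
  have hAx' : A *ᵥ x.ofLp = c • x.ofLp := by simpa using congrArg WithLp.ofLp hAx
  rw [sub_mulVec, hAx', smul_mulVec, one_mulVec, sub_self]

theorem toEuclideanLin_inv_apply_toEuclideanLin_apply {A : Matrix n n ℝ} (h : IsUnit A.det)
    (x : EuclideanSpace ℝ n) : toEuclideanLin A⁻¹ (toEuclideanLin A x) = x := by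
  rw [← LinearMap.comp_apply, ← toLpLin_mul_same, nonsing_inv_mul A h, toLpLin_one,
    LinearMap.id_apply]

end Matrix

theorem affAct_eq_self_of_add_eq_smul {m : ℕ} {A : Matrix (Fin m) (Fin m) ℝ}
    {a x : EuclideanSpace ℝ (Fin m)} {c : ℝ} (hx : ‖x‖ = 1) (hc : 0 < c)
    (h : a + Matrix.toEuclideanLin A x = c • x) : affAct A a x = x := by
  rw [affAct, h, norm_smul, hx, Real.norm_of_nonneg hc.le, mul_one, smul_smul,
    inv_mul_cancel₀ hc.ne', one_smul]

theorem stmt18_general (T : GL (Fin 2) ℝ) (θ : ℝ)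
    (hdet : (T : Matrix (Fin 2) (Fin 2) ℝ).det = 1)
    (htr : (T : Matrix (Fin 2) (Fin 2) ℝ).trace = 2 * Real.cos θ)
    (h0 : 0 < Real.cos θ) (h1 : Real.cos θ < 1) :
    ∃ a : EuclideanSpace ℝ (Fin 2), a ≠ 0 ∧
      ‖Matrix.toEuclideanLin ((T⁻¹ : GL (Fin 2) ℝ) : Matrix (Fin 2) (Fin 2) ℝ) a‖ < 1 ∧
      ∃ x : EuclideanSpace ℝ (Fin 2), ‖x‖ = 1 ∧
        affAct (T : Matrix (Fin 2) (Fin 2) ℝ) a x = x := by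
  set A : Matrix (Fin 2) (Fin 2) ℝ := (T : Matrix (Fin 2) (Fin 2) ℝ)
  rw [Matrix.coe_units_inv]
  obtain ⟨i, hi⟩ : ∃ i, 0 < A⁻¹ i i := Matrix.exists_diag_pos_of_trace_pos <| by
    rw [Matrix.trace_inv_fin_two_of_det_eq_one hdet, htr]; positivity
  set x : EuclideanSpace ℝ (Fin 2) := EuclideanSpace.single i 1
  have hx : ‖x‖ = 1 := by simp [x]
  set u := Matrix.toEuclideanLin A⁻¹ x
  have hux : 0 < ⟪u, x⟫ := by rwa [Matrix.inner_toEuclideanLin_single]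
  set c := ⟪u, x⟫ / ‖u‖ ^ 2
  have hu : u ≠ 0 := fun hu ↦ by simp [hu] at hux
  have hc : 0 < c := div_pos hux (by positivity)
  refine ⟨c • x - Matrix.toEuclideanLin A x, ?_, ?_, x, hx,
    affAct_eq_self_of_add_eq_smul hx hc (by abel)⟩
  · have htr' : |A.trace| < 2 := by rw [htr, abs_lt]; constructor <;> linarith
    refine sub_ne_zero.2 (Matrix.toEuclideanLin_apply_ne_smul ?_ ?_).symm
    · exact (Matrix.det_sub_smul_one_pos_fin_two hdet htr' c).ne'
    · exact norm_ne_zero_iff.1 (by rw [hx]; exact one_ne_zero)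
  · have hA : IsUnit A.det := by rw [hdet]; exact isUnit_one
    rw [map_sub, map_smul, Matrix.toEuclideanLin_inv_apply_toEuclideanLin_apply hA, ← hx]
    exact norm_smul_sub_lt_norm_of_inner_ne_zero hux.ne'

theorem stmt18 (T : GL (Fin 2) ℝ) (θ : ℝ)
    (hdet : (T : Matrix (Fin 2) (Fin 2) ℝ).det = 1)
    (htr : (T : Matrix (Fin 2) (Fin 2) ℝ).trace = 2 * Real.cos θ)
    (hsin : Real.sin θ ≠ 0)
    (h0 : 0 < Real.cos θ) (h1 : Real.cos θ < 1) :
    ∃ a : EuclideanSpace ℝ (Fin 2), a ≠ 0 ∧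
      ‖Matrix.toEuclideanLin ((T⁻¹ : GL (Fin 2) ℝ) : Matrix (Fin 2) (Fin 2) ℝ) a‖ < 1 ∧
      ∃ x : EuclideanSpace ℝ (Fin 2), ‖x‖ = 1 ∧
        affAct (T : Matrix (Fin 2) (Fin 2) ℝ) a x = x :=
  stmt18_general T θ hdet htr h0 h1
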